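/- For real parameters a, b, c with τ ∈ [0,1], the gap between the two eigenvalues of H̃(τ) = [[(a-2b+c)τ, 1-τ],[1-τ, (a+2b+c)τ]] equals 2√(1 - 2τ + (1+4b²)τ²), and this gap is strictly positive for every τ ∈ [0,1] provided b ≠ 0. -/
import Mathlib


open Matrix

/-- For `τ ∈ [0,1]`, the gap between the two eigenvalues
`(a+c)τ ± √(1 - 2τ + (1+4b²)τ²)` of `H̃(τ)` equals `2√(1 - 2τ + (1+4b²)τ²)`, and if
`b ≠ 0` this gap is strictly positive. -/
theorem interpolated_hamiltonian_gap (a b c τ : ℝ) (hτ : τ ∈ Set.Icc (0 : ℝ) 1) :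
    let M : Matrix (Fin 2) (Fin 2) ℝ :=
      !![(a - 2 * b + c) * τ, 1 - τ; 1 - τ, (a + 2 * b + c) * τ]
    let D : ℝ := Real.sqrt (1 - 2 * τ + (1 + 4 * b ^ 2) * τ ^ 2)
    (∃ v : Fin 2 → ℝ, v ≠ 0 ∧ M.mulVec v = ((a + c) * τ + D) • v) ∧
      (∃ v : Fin 2 → ℝ, v ≠ 0 ∧ M.mulVec v = ((a + c) * τ - D) • v) ∧
      ((a + c) * τ + D) - ((a + c) * τ - D) = 2 * D ∧
      (b ≠ 0 → 0 < 2 * D) := by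
  intro M D
  obtain ⟨hτ0, hτ1⟩ := hτ
  have hnn : (0:ℝ) ≤ 1 - 2 * τ + (1 + 4 * b ^ 2) * τ ^ 2 := by nlinarith [sq_nonneg (1 - τ), sq_nonneg (b * τ)]
  have hD0 : 0 ≤ D := Real.sqrt_nonneg _
  have hD2 : D ^ 2 = 1 - 2 * τ + (1 + 4 * b ^ 2) * τ ^ 2 := Real.sq_sqrt hnn
  have hpos : b ≠ 0 → 0 < 2 * D := by
    intro hb
    have hb2 : 0 < b ^ 2 := by positivity
    have hDsq : 0 < D ^ 2 := by
      rw [hD2]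
      rcases eq_or_lt_of_le hτ0 with h | h
      · rw [← h]; norm_num
      · nlinarith [sq_nonneg (1 - τ), mul_pos (mul_pos hb2 h) h]
    nlinarith
  refine ⟨?_, ?_, by ring, hpos⟩
  · by_cases hdeg : τ = 1 ∧ b = 0
    · obtain ⟨ht, hb⟩ := hdeg
      refine ⟨![1, 0], ?_, ?_⟩
      · intro h
        have := congrFun h 0
        simp at this
      · have hDz : D = 0 := by
          have : D ^ 2 = 0 := by rw [hD2, ht, hb]; ring
          nlinarith
        funext i
        fin_cases i <;>
          simp [M, Matrix.mulVec, dotProduct, Fin.sum_univ_two, hDz, ht, hb] <;> ring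
    · have key : 0 < (1 - τ) + D := by
        rcases lt_or_eq_of_le hτ1 with h | h
        · have : 0 < 1 - τ := by linarith
          linarith
        · have hb : b ≠ 0 := fun hb => hdeg ⟨h, hb⟩
          have hb2 : 0 < b ^ 2 := by positivity
          have : 0 < D ^ 2 := by rw [hD2, h]; nlinarith
          have : 0 < D := by nlinarith
          linarith
      refine ⟨![(1 - τ) + (D - 2 * b * τ), (D + 2 * b * τ) + (1 - τ)], ?_, ?_⟩
      · intro h
        have h0 := congrFun h 0
        have h1 := congrFun h 1
        simp at h0 h1
        linarith
      · funext i
        fin_cases i <;>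
          · simp [M, Matrix.mulVec, dotProduct, Fin.sum_univ_two]
            linear_combination -hD2
  · by_cases hdeg : τ = 1 ∧ b = 0
    · obtain ⟨ht, hb⟩ := hdeg
      refine ⟨![1, 0], ?_, ?_⟩
      · intro h
        have := congrFun h 0
        simp at this
      · have hDz : D = 0 := by
          have : D ^ 2 = 0 := by rw [hD2, ht, hb]; ring
          nlinarith
        funext i
        fin_cases i <;>
          simp [M, Matrix.mulVec, dotProduct, Fin.sum_univ_two, hDz, ht, hb] <;> ring
    · have key : 0 < (1 - τ) + D := by
        rcases lt_or_eq_of_le hτ1 with h | h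
        · have : 0 < 1 - τ := by linarith
          linarith
        · have hb : b ≠ 0 := fun hb => hdeg ⟨h, hb⟩
          have hb2 : 0 < b ^ 2 := by positivity
          have : 0 < D ^ 2 := by rw [hD2, h]; nlinarith
          have : 0 < D := by nlinarith
          linarith
      refine ⟨![(1 - τ) + (D + 2 * b * τ), (2 * b * τ - D) + (τ - 1)], ?_, ?_⟩
      · intro h
        have h0 := congrFun h 0
        have h1 := congrFun h 1
        simp at h0 h1
        linarith
      · funext i
        fin_cases i
        · simp [M, Matrix.mulVec, dotProduct, Fin.sum_univ_two]
          linear_combination hD2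
        · simp [M, Matrix.mulVec, dotProduct, Fin.sum_univ_two]
          linear_combination -hD2
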